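/- Suppose that for every i = 1,…,n−1 the binomial x_i^{c_i} − x_{i+1}^{c_{i+1}} belongs to I_A (equivalently c_i a_i = c_{i+1} a_{i+1}), and that the critical ideal satisfies C_A = ⟨x_1^{c_1} − x_2^{c_2}, …, x_{n−1}^{c_{n−1}} − x_n^{c_n}⟩. Then C_A = I_A. -/
import Mathlib


open MvPolynomial Finsupp

variable (K : Type*) [Field K]

/-- The `A`-degree of an exponent vector `u ∈ ℕ^n` with respect to `a_1, …, a_n ∈ ℕ`, namely
`∑ i, u i * a i`. -/
def degN {n : ℕ} (a : Fin n → ℕ) (u : Fin n →₀ ℕ) : ℕ :=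
  ∑ i, u i * a i

/-- The defining ideal `I_A` of the monomial curve `x_i = t^{a_i}`: the ideal generated by all
binomials `x^u - x^v` with `∑ u_i a_i = ∑ v_i a_i` (equivalently, the kernel of
`k[x_1,…,x_n] → k[t]`, `x_i ↦ t^{a_i}`). -/
noncomputable def curveIdeal {n : ℕ} (a : Fin n → ℕ) : Ideal (MvPolynomial (Fin n) K) :=
  Ideal.span { f | ∃ u v : Fin n →₀ ℕ, degN a u = degN a v ∧
    f = monomial u (1 : K) - monomial v (1 : K) }

/-- `c` is the critical exponent of the variable `x_i`: the least positive integer `c` with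
`c * a_i ∈ ∑_{j ≠ i} ℕ a_j`. -/
def IsCritExp {n : ℕ} (a : Fin n → ℕ) (i : Fin n) (c : ℕ) : Prop :=
  IsLeast { m : ℕ | 0 < m ∧ ∃ u : Fin n →₀ ℕ, u i = 0 ∧ m * a i = degN a u } c

/-- `f` is a critical binomial of `I_A` with respect to `x_i` (where `c` is the vector of
critical exponents): `f = x_i^{c_i} - ∏_{j ≠ i} x_j^{u_{ij}} ∈ I_A`. -/
def IsCritBinom {n : ℕ} (a c : Fin n → ℕ) (i : Fin n) (f : MvPolynomial (Fin n) K) : Prop :=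
  ∃ u : Fin n →₀ ℕ, u i = 0 ∧
    f = monomial (Finsupp.single i (c i)) (1 : K) - monomial u (1 : K) ∧
    f ∈ curveIdeal K a

/-- The critical ideal `C_A`: the ideal generated by all critical binomials of `I_A`. -/
noncomputable def criticalIdeal {n : ℕ} (a c : Fin n → ℕ) :
    Ideal (MvPolynomial (Fin n) K) :=
  Ideal.span { f | ∃ i : Fin n, IsCritBinom K a c i f }

/-- `S` is a set of binomials generating `J`. -/
def IsBinomGenSet {σ : Type*} (J : Ideal (MvPolynomial σ K)) (S : Set (MvPolynomial σ K)) :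
    Prop :=
  (∀ f ∈ S, ∃ u v : σ →₀ ℕ, f = monomial u (1 : K) - monomial v (1 : K)) ∧
  Ideal.span S = J

/-- The monomial `x^u` is an indispensable monomial of `J`: every set of binomials generating `J`
contains a binomial one of whose monomials is `x^u`. -/
def IndispMonomial {σ : Type*} (J : Ideal (MvPolynomial σ K)) (u : σ →₀ ℕ) : Prop :=
  ∀ S : Set (MvPolynomial σ K), IsBinomGenSet K J S → ∃ f ∈ S, u ∈ f.support

/-- `f` is an indispensable binomial of `J`: every set of binomials generating `J` contains
`f` or `-f`. -/
def IndispBinomial {σ : Type*} (J : Ideal (MvPolynomial σ K)) (f : MvPolynomial σ K) : Prop :=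
  ∀ S : Set (MvPolynomial σ K), IsBinomGenSet K J S → f ∈ S ∨ -f ∈ S

/-- `x^u - x^v` is a primitive binomial of `I_A`: it is a nonzero binomial of `I_A` and there is
no other nonzero binomial `x^{u'} - x^{v'} ∈ I_A` with `x^{u'} ∣ x^u` and `x^{v'} ∣ x^v`. -/
def IsPrimitive {n : ℕ} (a : Fin n → ℕ) (u v : Fin n →₀ ℕ) : Prop :=
  u ≠ v ∧ (monomial u (1 : K) - monomial v (1 : K)) ∈ curveIdeal K a ∧
  ∀ u' v' : Fin n →₀ ℕ, u' ≤ u → v' ≤ v → u' ≠ v' →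
    (monomial u' (1 : K) - monomial v' (1 : K)) ∈ curveIdeal K a → u' = u ∧ v' = v

section StatementElevenAux

open MvPolynomial Finsupp

variable (K : Type*) [Field K]

lemma degN_add' {n : ℕ} (a : Fin n → ℕ) (u v : Fin n →₀ ℕ) :
    degN a (u + v) = degN a u + degN a v := by
  simp [degN, add_mul, Finset.sum_add_distrib]

lemma degN_single' {n : ℕ} (a : Fin n → ℕ) (i : Fin n) (k : ℕ) :
    degN a (Finsupp.single i k) = k * a i := by
  rw [degN, Finset.sum_eq_single i]
  · simp
  · intro b _ hb; simp [Finsupp.single_apply, Ne.symm hb]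
  · simp

lemma aeval_monomial_one' {n : ℕ} (a : Fin n → ℕ) (u : Fin n →₀ ℕ) :
    aeval (fun i => (Polynomial.X : Polynomial K) ^ (a i)) (monomial u (1 : K)) =
      Polynomial.X ^ degN a u := by
  rw [aeval_monomial, map_one, one_mul, Finsupp.prod]
  rw [show degN a u = ∑ i ∈ u.support, u i * a i by
    rw [degN]; exact (Finset.sum_subset (Finset.subset_univ _) (by
      intro x _ hx; simp [Finsupp.notMem_support_iff.mp hx])).symm]
  rw [← Finset.prod_pow_eq_pow_sum]
  exact Finset.prod_congr rfl fun i _ => by rw [← pow_mul, mul_comm (a i)]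

lemma curveIdeal_le_ker' {n : ℕ} (a : Fin n → ℕ) :
    ∀ f ∈ curveIdeal K a, aeval (fun i => (Polynomial.X : Polynomial K) ^ (a i)) f = 0 := by
  intro f hf
  have : curveIdeal K a ≤ RingHom.ker (aeval (R := K)
      (fun i => (Polynomial.X : Polynomial K) ^ (a i))).toRingHom := by
    rw [curveIdeal, Ideal.span_le]
    rintro g ⟨u, v, huv, rfl⟩
    simp only [SetLike.mem_coe, RingHom.mem_ker, AlgHom.toRingHom_eq_coe, RingHom.coe_coe,
      map_sub, aeval_monomial_one', huv, sub_self]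
  exact this hf

lemma deg_eq_of_mem' {n : ℕ} (a : Fin n → ℕ) (u v : Fin n →₀ ℕ)
    (h : (monomial u (1 : K)) - monomial v 1 ∈ curveIdeal K a) : degN a u = degN a v := by
  have := curveIdeal_le_ker' K a _ h
  rw [map_sub, aeval_monomial_one', aeval_monomial_one', sub_eq_zero] at this
  have := congrArg Polynomial.natDegree this
  simpa using this

section arith
variable {n : ℕ} (a c : Fin n → ℕ) (hc : ∀ i, IsCritExp a i (c i))

include hc in
lemma c_pos' (i : Fin n) : 0 < c i := (hc i).1.1

include hc in
lemma coprime_c' {i j : Fin n} (hij : i ≠ j) (hm : c i * a i = c j * a j) :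
    Nat.Coprime (c i) (c j) := by
  set g := Nat.gcd (c i) (c j) with hg
  have hgi : g ∣ c i := Nat.gcd_dvd_left _ _
  have hgj : g ∣ c j := Nat.gcd_dvd_right _ _
  have hgpos : 0 < g := Nat.gcd_pos_of_pos_left _ (c_pos' a c hc i)
  have key : (c i / g) * a i = (c j / g) * a j := by
    obtain ⟨x, hx⟩ := hgi; obtain ⟨y, hy⟩ := hgj
    rw [hx, hy, Nat.mul_div_cancel_left _ hgpos, Nat.mul_div_cancel_left _ hgpos]
    rw [hx, hy] at hm
    rw [mul_assoc, mul_assoc] at hm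
    exact Nat.eq_of_mul_eq_mul_left hgpos hm
  have hmem : (c i / g) ∈ { m : ℕ | 0 < m ∧ ∃ u : Fin n →₀ ℕ, u i = 0 ∧ m * a i = degN a u } := by
    refine ⟨Nat.div_pos (Nat.le_of_dvd (c_pos' a c hc i) hgi) hgpos, Finsupp.single j (c j / g),
      ?_, ?_⟩
    · rw [Finsupp.single_apply]; simp [Ne.symm hij]
    · rw [degN_single']; exact key
  have hle : c i ≤ c i / g := (hc i).2 hmem
  have : g ≤ 1 := by
    by_contra hg1
    push_neg at hg1
    have := Nat.div_lt_self (c_pos' a c hc i) hg1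
    omega
  simpa [Nat.Coprime, hg] using by omega

include hc in
lemma c_dvd_a' {i j : Fin n} (hij : i ≠ j) (hm : c i * a i = c j * a j) : c i ∣ a j :=
  (Nat.Coprime.dvd_of_dvd_mul_left (coprime_c' a c hc hij hm) ⟨a i, hm.symm⟩)

lemma c_coprime_a' {i j : Fin n} (hgcd : Finset.univ.gcd a = 1)
    (hij : j ≠ i) (hm : ∀ k l : Fin n, c k * a k = c l * a l)
    (hc : ∀ i, IsCritExp a i (c i)) : Nat.Coprime (c i) (a i) := by
  have : Nat.gcd (c i) (a i) ∣ Finset.univ.gcd a := by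
    refine Finset.dvd_gcd fun k _ => ?_
    rcases eq_or_ne k i with rfl | hk
    · exact Nat.gcd_dvd_right _ _
    · exact dvd_trans (Nat.gcd_dvd_left _ _) (c_dvd_a' a c hc (Ne.symm hk) (hm i k))
  rw [hgcd] at this
  exact Nat.eq_one_of_dvd_one this

end arith

lemma degN_inj' {n : ℕ} {a c : Fin n → ℕ} (ha : ∀ i, 0 < a i)
    (hca : ∀ i : Fin n, (i : ℕ) + 1 < n → Nat.Coprime (c i) (a i))
    (hda : ∀ i j : Fin n, i ≠ j → c i ∣ a j)
    {u v : Fin n →₀ ℕ}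
    (hu : ∀ i : Fin n, (i : ℕ) + 1 < n → u i < c i)
    (hv : ∀ i : Fin n, (i : ℕ) + 1 < n → v i < c i)
    (hdeg : degN a u = degN a v) : u = v := by
  rcases Nat.eq_zero_or_pos n with rfl | hn
  · exact Subsingleton.elim u v
  have key : ∀ i : Fin n, (i : ℕ) + 1 < n → u i = v i := by
    intro i hi
    have hsplit : ∀ w : Fin n →₀ ℕ, ∃ s, degN a w = w i * a i + s ∧ c i ∣ s := by
      intro w
      refine ⟨∑ j ∈ Finset.univ.erase i, w j * a j, ?_, ?_⟩
      · exact (Finset.add_sum_erase _ _ (Finset.mem_univ i)).symm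
      · exact Finset.dvd_sum fun j hj =>
          Dvd.dvd.mul_left (hda i j (Ne.symm (Finset.mem_erase.mp hj).1)) _
    obtain ⟨s₁, hs₁, hd₁⟩ := hsplit u
    obtain ⟨s₂, hs₂, hd₂⟩ := hsplit v
    have hmod : u i * a i ≡ v i * a i [MOD c i] := by
      have h1 : u i * a i ≡ u i * a i + s₁ [MOD c i] := by
        simpa using (Nat.ModEq.refl (u i * a i)).add ((Nat.modEq_zero_iff_dvd).2 hd₁).symm
      have h2 : v i * a i ≡ v i * a i + s₂ [MOD c i] := by
        simpa using (Nat.ModEq.refl (v i * a i)).add ((Nat.modEq_zero_iff_dvd).2 hd₂).symm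
      calc u i * a i ≡ u i * a i + s₁ [MOD c i] := h1
        _ = v i * a i + s₂ := by rw [← hs₁, ← hs₂, hdeg]
        _ ≡ v i * a i [MOD c i] := h2.symm
    have := Nat.ModEq.cancel_right_of_coprime (hca i hi) hmod
    rw [Nat.ModEq, Nat.mod_eq_of_lt (hu i hi), Nat.mod_eq_of_lt (hv i hi)] at this
    exact this
  ext i
  rcases Nat.lt_or_ge ((i : ℕ) + 1) n with hi | hi
  · exact key i hi
  · have hlast : ∀ j : Fin n, j ≠ i → u j = v j := by
      intro j hj
      refine key j ?_
      have : (j : ℕ) ≠ (i : ℕ) := fun h => hj (Fin.ext h)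
      have := j.isLt; have := i.isLt
      omega
    have h1 : degN a u = u i * a i + ∑ j ∈ Finset.univ.erase i, u j * a j :=
      (Finset.add_sum_erase _ _ (Finset.mem_univ i)).symm
    have h2 : degN a v = v i * a i + ∑ j ∈ Finset.univ.erase i, v j * a j :=
      (Finset.add_sum_erase _ _ (Finset.mem_univ i)).symm
    have hsum : ∑ j ∈ Finset.univ.erase i, u j * a j = ∑ j ∈ Finset.univ.erase i, v j * a j :=
      Finset.sum_congr rfl fun j hj => by rw [hlast j (Finset.mem_erase.mp hj).1]
    have : u i * a i = v i * a i := by omega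
    exact Nat.eq_of_mul_eq_mul_right (ha i) this

lemma nf_exists' {n : ℕ} (a c : Fin n → ℕ) (hcpos : ∀ i, 0 < c i)
    (hm : ∀ (i : ℕ) (h : i + 1 < n),
      c ⟨i, Nat.lt_of_succ_lt h⟩ * a ⟨i, Nat.lt_of_succ_lt h⟩ = c ⟨i + 1, h⟩ * a ⟨i + 1, h⟩)
    (u : Fin n →₀ ℕ) :
    ∃ w : Fin n →₀ ℕ, (∀ i : Fin n, (i : ℕ) + 1 < n → w i < c i) ∧ degN a w = degN a u ∧
      monomial u (1 : K) - monomial w (1 : K) ∈ Ideal.span { f | ∃ (i : ℕ) (h : i + 1 < n),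
        f = monomial (Finsupp.single (⟨i, Nat.lt_of_succ_lt h⟩ : Fin n)
              (c ⟨i, Nat.lt_of_succ_lt h⟩)) (1 : K) -
            monomial (Finsupp.single (⟨i + 1, h⟩ : Fin n) (c ⟨i + 1, h⟩)) (1 : K) } := by
  set J := Ideal.span { f | ∃ (i : ℕ) (h : i + 1 < n),
        f = monomial (Finsupp.single (⟨i, Nat.lt_of_succ_lt h⟩ : Fin n)
              (c ⟨i, Nat.lt_of_succ_lt h⟩)) (1 : K) -
            monomial (Finsupp.single (⟨i + 1, h⟩ : Fin n) (c ⟨i + 1, h⟩)) (1 : K) } with hJ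
  set B := (Finset.univ.sup c) + 2 with hB
  set b : Fin n → ℕ := fun i => B ^ (n - (i : ℕ)) with hb
  suffices H : ∀ N : ℕ, ∀ u : Fin n →₀ ℕ, degN b u = N →
      ∃ w : Fin n →₀ ℕ, (∀ i : Fin n, (i : ℕ) + 1 < n → w i < c i) ∧ degN a w = degN a u ∧
        monomial u (1 : K) - monomial w (1 : K) ∈ J from H _ u rfl
  intro N
  induction N using Nat.strong_induction_on with
  | _ N ih =>
    intro u hu
    by_cases hnorm : ∀ i : Fin n, (i : ℕ) + 1 < n → u i < c i
    · exact ⟨u, hnorm, rfl, by simp⟩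
    push_neg at hnorm
    obtain ⟨i, hi, hci⟩ := hnorm
    set i' : Fin n := ⟨(i : ℕ) + 1, hi⟩ with hi'
    set s : Fin n →₀ ℕ := Finsupp.single i (c i) with hs
    have hle : s ≤ u := Finsupp.single_le_iff.mpr hci
    set w0 : Fin n →₀ ℕ := u - s with hw0
    have hw0u : w0 + s = u := tsub_add_cancel_of_le hle
    set u' : Fin n →₀ ℕ := w0 + Finsupp.single i' (c i') with hu'
    have hii : c i * a i = c i' * a i' := by
      have := hm (i : ℕ) hi
      simpa [Fin.eta] using this
    have hdeg' : degN a u' = degN a u := by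
      rw [hu', degN_add', degN_single', ← hii, ← degN_single' a i (c i), ← degN_add', hw0u]
    have hlt : degN b u' < N := by
      rw [← hu, ← hw0u, hu', degN_add', degN_add', degN_single', degN_single']
      have h1 : c i' ≤ Finset.univ.sup c := Finset.le_sup (Finset.mem_univ i')
      have h2 : (n - (i' : ℕ)) + 1 = n - (i : ℕ) := by
        have := i.isLt; simp only [hi']; omega
      have h3 : b i' * B = b i := by
        simp only [hb, ← pow_succ, h2]
      have h4 : c i' * b i' < b i := by
        calc c i' * b i' < B * b i' := by
              have : c i' < B := by omega
              exact Nat.mul_lt_mul_of_lt_of_le this le_rfl (by positivity)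
          _ = b i := by rw [mul_comm, h3]
      have h5 : b i ≤ c i * b i := Nat.le_mul_of_pos_left _ (hcpos i)
      omega
    have hgen : (monomial s (1 : K) - monomial (Finsupp.single i' (c i')) (1 : K)) ∈ J := by
      refine Ideal.subset_span ⟨(i : ℕ), hi, ?_⟩
      simp only [hs, hi', Fin.eta]
    have hstep : monomial u (1 : K) - monomial u' (1 : K) ∈ J := by
      have : monomial u (1 : K) - monomial u' (1 : K) =
          monomial w0 (1 : K) * (monomial s (1 : K) - monomial (Finsupp.single i' (c i')) 1) := by
        rw [mul_sub, monomial_mul, monomial_mul, one_mul, hw0u, hu']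
      rw [this]
      exact Ideal.mul_mem_left _ _ hgen
    obtain ⟨w, hw1, hw2, hw3⟩ := ih _ hlt u' rfl
    refine ⟨w, hw1, by rw [hw2, hdeg'], ?_⟩
    have : monomial u (1 : K) - monomial w 1 =
        (monomial u 1 - monomial u' 1) + (monomial u' 1 - monomial w 1) := by ring
    rw [this]
    exact Ideal.add_mem _ hstep hw3

end StatementElevenAux

/-- Suppose that for every `i = 1, …, n-1` the binomial
`x_i^{c_i} - x_{i+1}^{c_{i+1}}` belongs to `I_A`, and that
`C_A = ⟨x_1^{c_1} - x_2^{c_2}, …, x_{n-1}^{c_{n-1}} - x_n^{c_n}⟩`. Then `C_A = I_A`. -/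
theorem statement11 {n : ℕ} (a c : Fin n → ℕ) (ha : ∀ i, 0 < a i)
    (hgcd : Finset.univ.gcd a = 1) (hc : ∀ i, IsCritExp a i (c i))
    (hmem : ∀ (i : ℕ) (h : i + 1 < n),
      (monomial (Finsupp.single (⟨i, Nat.lt_of_succ_lt h⟩ : Fin n)
          (c ⟨i, Nat.lt_of_succ_lt h⟩)) (1 : K) -
        monomial (Finsupp.single (⟨i + 1, h⟩ : Fin n) (c ⟨i + 1, h⟩)) (1 : K)) ∈
        curveIdeal K a)
    (hspan : criticalIdeal K a c = Ideal.span { f | ∃ (i : ℕ) (h : i + 1 < n),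
      f = monomial (Finsupp.single (⟨i, Nat.lt_of_succ_lt h⟩ : Fin n)
            (c ⟨i, Nat.lt_of_succ_lt h⟩)) (1 : K) -
          monomial (Finsupp.single (⟨i + 1, h⟩ : Fin n) (c ⟨i + 1, h⟩)) (1 : K) }) :
    criticalIdeal K a c = curveIdeal K a := by

  -- notation for the span of the consecutive critical binomials
  set J := Ideal.span { f | ∃ (i : ℕ) (h : i + 1 < n),
      f = monomial (Finsupp.single (⟨i, Nat.lt_of_succ_lt h⟩ : Fin n)
            (c ⟨i, Nat.lt_of_succ_lt h⟩)) (1 : K) -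
          monomial (Finsupp.single (⟨i + 1, h⟩ : Fin n) (c ⟨i + 1, h⟩)) (1 : K) } with hJ
  have hcpos : ∀ i, 0 < c i := fun i => (hc i).1.1
  -- consecutive equal products
  have hconsec : ∀ (i : ℕ) (h : i + 1 < n),
      c ⟨i, Nat.lt_of_succ_lt h⟩ * a ⟨i, Nat.lt_of_succ_lt h⟩ = c ⟨i + 1, h⟩ * a ⟨i + 1, h⟩ := by
    intro i h
    have := deg_eq_of_mem' K a _ _ (hmem i h)
    rwa [degN_single', degN_single'] at this
  -- all products are equal
  have hall : ∀ i j : Fin n, c i * a i = c j * a j := by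
    have key : ∀ (k : ℕ) (hk : k < n) (h0 : 0 < n),
        c ⟨k, hk⟩ * a ⟨k, hk⟩ = c ⟨0, h0⟩ * a ⟨0, h0⟩ := by
      intro k
      induction k with
      | zero => intro hk h0; rfl
      | succ m ihm =>
        intro hk h0
        have hm' : m + 1 < n := hk
        rw [← hconsec m hm']
        exact ihm (Nat.lt_of_succ_lt hm') h0
    intro i j
    have h0 : 0 < n := Nat.pos_of_ne_zero (by have := i.isLt; omega)
    have h1 := key (i : ℕ) i.isLt h0
    have h2 := key (j : ℕ) j.isLt h0
    rw [Fin.eta] at h1 h2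
    rw [h1, h2]
  have hda : ∀ i j : Fin n, i ≠ j → c i ∣ a j := fun i j hij =>
    c_dvd_a' a c hc hij (hall i j)
  have hca : ∀ i : Fin n, (i : ℕ) + 1 < n → Nat.Coprime (c i) (a i) := by
    intro i hi
    have hj : (⟨(i : ℕ) + 1, hi⟩ : Fin n) ≠ i := by
      intro h
      have := congrArg Fin.val h
      simp at this
    exact c_coprime_a' a c hgcd hj hall hc
  -- the two inclusions
  apply le_antisymm
  · rw [criticalIdeal, Ideal.span_le]
    rintro f ⟨i, u, -, -, hf⟩
    exact hf
  · rw [hspan, curveIdeal, Ideal.span_le]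
    rintro f ⟨u, v, huv, rfl⟩
    obtain ⟨wu, hwu1, hwu2, hwu3⟩ := nf_exists' K a c hcpos hconsec u
    obtain ⟨wv, hwv1, hwv2, hwv3⟩ := nf_exists' K a c hcpos hconsec v
    have hww : wu = wv :=
      degN_inj' ha hca hda hwu1 hwv1 (by rw [hwu2, hwv2, huv])
    have : monomial u (1 : K) - monomial v 1 =
        (monomial u 1 - monomial wu 1) - (monomial v 1 - monomial wv 1) := by
      rw [hww]; ring
    rw [SetLike.mem_coe, this]
    exact Ideal.sub_mem _ hwu3 hwv3
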